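/- arXiv:1509.09315 — 2 statements merged into one kernel-verified Lean document; each statement's English description precedes it below -/
import Mathlib

section
/- For every I ∈ 𝓘_λ the weight function W_I(t,z) is a polynomial: although the expression being symmetrized has denominators t^{(k)}_b − t^{(k)}_a, after performing the symmetrization Sym_λ all denominators cancel, i.e. W_I(t,z) lies in the polynomial subring ℚ[t,z] of ℚ(t,z). -/
open MvPolynomial

namespace WeightFn

/-- `clam lam k` is the partial sum `λ^{(k+1)} = λ_1 + … + λ_{k+1}` (`k` is 0-based). -/
def clam {N : ℕ} (lam : Fin N → ℕ) (k : ℕ) : ℕ :=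
  ∑ l : Fin N, if (l : ℕ) ≤ k then lam l else 0

/-- `cup I k` is the cumulative union `I^{(k+1)} = I_1 ∪ … ∪ I_{k+1}` (`k` is 0-based). -/
def cup {n N : ℕ} (I : Fin N → Finset (Fin n)) (k : ℕ) : Finset (Fin n) :=
  Finset.univ.biUnion fun l : Fin N => if (l : ℕ) ≤ k then I l else ∅

/-- `nth S a` is the value (as a natural number) of the `(a+1)`-st smallest element of `S`
(0-based `a`); junk value `0` if `a` is out of range. -/
def nth {n : ℕ} (S : Finset (Fin n)) (a : ℕ) : ℕ :=
  ((S.sort (· ≤ ·)).map Fin.val).getD a 0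

/-- Membership in `𝓘_λ`: an `N`-tuple of pairwise disjoint subsets of `{1,…,n}` with
`|I_k| = λ_k`. -/
def IdxTuple {n N : ℕ} (lam : Fin N → ℕ) (I : Fin N → Finset (Fin n)) : Prop :=
  (∀ k l : Fin N, k ≠ l → Disjoint (I k) (I l)) ∧ ∀ k, (I k).card = lam k

/-- The symmetrizing group `S^{(λ)} = S_{λ^{(1)}} × … × S_{λ^{(N-1)}}`. -/
abbrev SymGrp {N : ℕ} (lam : Fin N → ℕ) : Type :=
  ∀ k : Fin (N - 1), Equiv.Perm (Fin (clam lam (k : ℕ)))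

/-- The factor `ℓ^{(k+1)}_I(a,b)` (0-based `k`, `a`, `b`), where `u` is the value of
`t^{(k+1)}_a` and `v` the value of `t^{(k+2)}_b`: it is `1 + v - u` if
`i^{(k+2)}_b < i^{(k+1)}_a`, it is `v - u` if `i^{(k+2)}_b > i^{(k+1)}_a`
(and `1` in the remaining case `i^{(k+2)}_b = i^{(k+1)}_a`, where no factor occurs). -/
def lfac {n N : ℕ} {F : Type} [Field F] (I : Fin N → Finset (Fin n))
    (k a b : ℕ) (u v : F) : F :=
  if nth (cup I (k + 1)) b < nth (cup I k) a then 1 + v - u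
  else if nth (cup I k) a < nth (cup I (k + 1)) b then v - u
  else 1

/-- The variable in column `k+2` (0-based level `k+1`), lower index `b`, after applying the
symmetrizing permutation `σ`: it is a `t`-variable (given by the assignment `asn`) if
`k+1` is not the last column, and the `z`-variable `zf b` (convention `t^{(N)}_b = z_b`)
if it is. -/
def nextVar {N : ℕ} {F : Type} [Field F] (lam : Fin N → ℕ)
    (asn : ℕ → ℕ → F) (zf : ℕ → F) (σ : SymGrp lam)
    (k : Fin (N - 1)) (b : Fin (clam lam ((k : ℕ) + 1))) : F :=
  if h : (k : ℕ) + 1 < N - 1 then asn ((k : ℕ) + 1) ((σ ⟨(k : ℕ) + 1, h⟩) b).val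
  else zf (b : ℕ)

/-- The term of the weight function corresponding to `σ ∈ S^{(λ)}`, i.e. the function
`f(σ(t),z)` where `f` is the expression inside the symmetrization `Sym_λ` in the definition
of the weight function `W_I`.  The values of the `t`-variables are given by the assignment
`asn` (level, lower index) and those of the `z`-variables by `zf`. -/
def termW {n N : ℕ} {F : Type} [Field F] (lam : Fin N → ℕ)
    (I : Fin N → Finset (Fin n)) (asn : ℕ → ℕ → F) (zf : ℕ → F)
    (σ : SymGrp lam) : F :=
  ∏ k : Fin (N - 1),
    ((∏ a : Fin (clam lam (k : ℕ)), ∏ b : Fin (clam lam ((k : ℕ) + 1)),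
        lfac I (k : ℕ) (a : ℕ) (b : ℕ) (asn (k : ℕ) ((σ k) a).val)
          (nextVar lam asn zf σ k b)) *
      ∏ a : Fin (clam lam (k : ℕ)), ∏ b : Fin (clam lam (k : ℕ)),
        if (a : ℕ) < (b : ℕ) then
          (1 + asn (k : ℕ) ((σ k) b).val - asn (k : ℕ) ((σ k) a).val) /
            (asn (k : ℕ) ((σ k) b).val - asn (k : ℕ) ((σ k) a).val)
        else 1)

/-- The type of variables: `Sum.inl (k, a)` is the variable `t^{(k+1)}_{a+1}` (0-based level
`k`, 0-based lower index `a`), and `Sum.inr b` is the variable `z_{b+1}` (0-based `b`). -/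
abbrev V : Type := (ℕ × ℕ) ⊕ ℕ

/-- The field `ℚ(t,z)` of rational functions. -/
abbrev K : Type := FractionRing (MvPolynomial V ℚ)

/-- The variable `t^{(k+1)}_{a+1}` as an element of `ℚ(t,z)`. -/
noncomputable def tv (k a : ℕ) : K :=
  algebraMap (MvPolynomial V ℚ) K (X (Sum.inl (k, a)))

/-- The variable `z_{b+1}` as an element of `ℚ(t,z)`. -/
noncomputable def zv (b : ℕ) : K :=
  algebraMap (MvPolynomial V ℚ) K (X (Sum.inr b))

/-- The weight function `W_I(t,z) ∈ ℚ(t,z)`:  the sum over all `σ ∈ S^{(λ)}` of the terms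
`f(σ(t),z)`, i.e. `Sym_λ f(t,z)`. -/
noncomputable def W {n N : ℕ} (lam : Fin N → ℕ) (I : Fin N → Finset (Fin n)) : K :=
  ∑ σ : SymGrp lam, termW lam I tv zv σ

/-! ### Auxiliary machinery for the proof -/

section Pairs

def pairs (m : ℕ) : Finset (Fin m × Fin m) := Finset.univ.filter fun p => p.1 < p.2

theorem prod_if_eq_pairs {R : Type*} [CommMonoid R] (m : ℕ) (f : Fin m → Fin m → R) :
    (∏ a : Fin m, ∏ b : Fin m, if (a : ℕ) < (b : ℕ) then f a b else 1)
      = ∏ p ∈ pairs m, f p.1 p.2 := by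
  rw [pairs, Finset.prod_filter, ← Fintype.prod_prod_type']
  refine Finset.prod_congr rfl fun p _ => ?_
  simp only [Fin.lt_def]

theorem prod_Ioi_eq_pairs {R : Type*} [CommMonoid R] (m : ℕ) (f : Fin m → Fin m → R) :
    (∏ i : Fin m, ∏ j ∈ Finset.Ioi i, f i j) = ∏ p ∈ pairs m, f p.1 p.2 := by
  rw [← prod_if_eq_pairs]
  refine Finset.prod_congr rfl fun i _ => ?_
  have h : Finset.Ioi i = Finset.univ.filter (fun j => i < j) := by ext j; simp
  rw [h, Finset.prod_filter]
  refine Finset.prod_congr rfl fun j _ => ?_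
  simp only [Fin.lt_def]

end Pairs

section Swap

variable {N : ℕ} (lam : Fin N → ℕ)

/-- swap of two natural numbers as a function on `ℕ`. -/
def swapf (x y c : ℕ) : ℕ := if c = x then y else if c = y then x else c

/-- the assignment obtained from `asn` by swapping the lower indices `x` and `y`
in column `kv`. -/
def asnSwap {F : Type} (kv x y : ℕ) (asn : ℕ → ℕ → F) : ℕ → ℕ → F :=
  fun j c => if j = kv then asn j (swapf x y c) else asn j c

variable (k : Fin (N - 1)) (a0 b0 : Fin (clam lam (k : ℕ)))

/-- the element of `S^{(λ)}` that is the transposition `(a0 b0)` in component `k`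
and the identity elsewhere. -/
def swapPerm (j : Fin (N - 1)) : Equiv.Perm (Fin (clam lam (j : ℕ))) :=
  if h : (j : ℕ) = (k : ℕ) then
    Equiv.swap ⟨(a0 : ℕ), by rw [h]; exact a0.isLt⟩ ⟨(b0 : ℕ), by rw [h]; exact b0.isLt⟩
  else 1

/-- multiplication by the transposition on component `k`. -/
def updateσ (σ : SymGrp lam) : SymGrp lam := fun j => swapPerm lam k a0 b0 j * σ j

theorem updateσ_invol : Function.Involutive (updateσ lam k a0 b0) := by
  intro σ; funext j
  unfold updateσ swapPerm
  split_ifs with h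
  · simp [← mul_assoc]
  · simp

theorem asnSwap_apply {F : Type} [Field F] (asn : ℕ → ℕ → F) (σ : SymGrp lam)
    (j : Fin (N - 1)) (x : Fin (clam lam (j : ℕ))) :
    asnSwap (k : ℕ) (a0 : ℕ) (b0 : ℕ) asn (j : ℕ) ((σ j x) : Fin _).val
      = asn (j : ℕ) (((updateσ lam k a0 b0 σ) j) x).val := by
  unfold asnSwap updateσ swapPerm
  by_cases h : (j : ℕ) = (k : ℕ)
  · rw [if_pos h, dif_pos h]
    congr 1
    simp only [Equiv.Perm.mul_apply, Equiv.swap_apply_def, swapf, Fin.ext_iff]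
    split_ifs <;> simp_all
  · rw [if_neg h, dif_neg h, one_mul]

theorem nextVar_asnSwap {F : Type} [Field F] (asn : ℕ → ℕ → F) (zf : ℕ → F)
    (σ : SymGrp lam) (j : Fin (N - 1)) (b : Fin (clam lam ((j : ℕ) + 1))) :
    nextVar lam (asnSwap (k : ℕ) (a0 : ℕ) (b0 : ℕ) asn) zf σ j b
      = nextVar lam asn zf (updateσ lam k a0 b0 σ) j b := by
  unfold nextVar
  split_ifs with h
  · exact asnSwap_apply lam k a0 b0 asn σ ⟨(j : ℕ) + 1, h⟩ b
  · rfl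

theorem termW_asnSwap {n : ℕ} {F : Type} [Field F] (I : Fin N → Finset (Fin n))
    (asn : ℕ → ℕ → F) (zf : ℕ → F) (σ : SymGrp lam) :
    termW lam I (asnSwap (k : ℕ) (a0 : ℕ) (b0 : ℕ) asn) zf σ
      = termW lam I asn zf (updateσ lam k a0 b0 σ) := by
  unfold termW
  refine Finset.prod_congr rfl fun j _ => ?_
  congr 1
  · refine Finset.prod_congr rfl fun a _ => Finset.prod_congr rfl fun b _ => ?_
    rw [asnSwap_apply, nextVar_asnSwap]
  · refine Finset.prod_congr rfl fun a _ => Finset.prod_congr rfl fun b _ => ?_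
    rw [asnSwap_apply, asnSwap_apply]

end Swap

section MapTermW

variable {F F' : Type} [Field F] [Field F'] (g : F →+* F')

theorem map_lfac {n N : ℕ} (I : Fin N → Finset (Fin n)) (k a b : ℕ) (u v : F) :
    g (lfac I k a b u v) = lfac I k a b (g u) (g v) := by
  unfold lfac; split_ifs <;> simp

theorem map_nextVar {N : ℕ} (lam : Fin N → ℕ) (asn : ℕ → ℕ → F) (zf : ℕ → F)
    (σ : SymGrp lam) (j : Fin (N - 1)) (b : Fin (clam lam ((j : ℕ) + 1))) :
    g (nextVar lam asn zf σ j b)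
      = nextVar lam (fun j c => g (asn j c)) (fun b => g (zf b)) σ j b := by
  unfold nextVar; split_ifs <;> rfl

theorem map_termW {n N : ℕ} (lam : Fin N → ℕ) (I : Fin N → Finset (Fin n))
    (asn : ℕ → ℕ → F) (zf : ℕ → F) (σ : SymGrp lam) :
    g (termW lam I asn zf σ)
      = termW lam I (fun j c => g (asn j c)) (fun b => g (zf b)) σ := by
  unfold termW
  rw [map_prod]
  refine Finset.prod_congr rfl fun j _ => ?_
  rw [map_mul]
  congr 1
  · rw [map_prod]
    refine Finset.prod_congr rfl fun a _ => ?_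
    rw [map_prod]
    refine Finset.prod_congr rfl fun b _ => ?_
    rw [map_lfac, map_nextVar]
  · rw [map_prod]
    refine Finset.prod_congr rfl fun a _ => ?_
    rw [map_prod]
    refine Finset.prod_congr rfl fun b _ => ?_
    split_ifs <;> simp

end MapTermW


section SwapK

theorem swapf_val {m : ℕ} (a0 b0 c : Fin m) :
    swapf (a0 : ℕ) (b0 : ℕ) (c : ℕ) = ((Equiv.swap a0 b0 c : Fin m) : ℕ) := by
  rw [Equiv.swap_apply_def]; unfold swapf
  split_ifs <;> simp_all [Fin.ext_iff]

variable {N : ℕ} (lam : Fin N → ℕ) (k : Fin (N - 1)) (a0 b0 : Fin (clam lam (k : ℕ)))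

def wv1 : V := Sum.inl ((k : ℕ), (a0 : ℕ))
def wv2 : V := Sum.inl ((k : ℕ), (b0 : ℕ))

theorem wv1_ne_wv2 (h : a0 ≠ b0) : wv1 lam k a0 ≠ wv2 lam k b0 := by
  simp only [wv1, wv2, ne_eq, Sum.inl.injEq, Prod.mk.injEq, true_and]
  exact fun he => h (Fin.ext he)

theorem swap_inl (j c : ℕ) :
    (Equiv.swap (wv1 lam k a0) (wv2 lam k b0)) (Sum.inl (j, c))
      = Sum.inl (j, if j = (k : ℕ) then swapf (a0 : ℕ) (b0 : ℕ) c else c) := by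
  rw [Equiv.swap_apply_def]
  unfold wv1 wv2 swapf
  split_ifs <;> simp_all

theorem swap_inr (b : ℕ) :
    (Equiv.swap (wv1 lam k a0) (wv2 lam k b0)) (Sum.inr b) = Sum.inr b :=
  Equiv.swap_apply_of_ne_of_ne (by simp [wv1]) (by simp [wv2])

noncomputable def φpoly : MvPolynomial V ℚ ≃+* MvPolynomial V ℚ :=
  (renameEquiv ℚ (Equiv.swap (wv1 lam k a0) (wv2 lam k b0))).toRingEquiv

noncomputable def φK : K ≃+* K := IsFractionRing.ringEquivOfRingEquiv (φpoly lam k a0 b0)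

theorem φK_algebraMap (a : MvPolynomial V ℚ) :
    φK lam k a0 b0 (algebraMap (MvPolynomial V ℚ) K a)
      = algebraMap (MvPolynomial V ℚ) K
          (rename (Equiv.swap (wv1 lam k a0) (wv2 lam k b0)) a) := by
  simp [φK, φpoly]

theorem φK_tv (j c : ℕ) :
    φK lam k a0 b0 (tv j c) = asnSwap (k : ℕ) (a0 : ℕ) (b0 : ℕ) tv j c := by
  unfold tv
  rw [φK_algebraMap, rename_X, swap_inl]
  by_cases hj : j = (k : ℕ) <;> simp [asnSwap, tv, hj]

theorem φK_zv (b : ℕ) : φK lam k a0 b0 (zv b) = zv b := by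
  unfold zv
  rw [φK_algebraMap, rename_X, swap_inr]

theorem φK_W {n : ℕ} (I : Fin N → Finset (Fin n)) :
    φK lam k a0 b0 (W lam I) = W lam I := by
  unfold W
  rw [map_sum]
  have h1 : ∀ σ : SymGrp lam,
      φK lam k a0 b0 (termW lam I tv zv σ)
        = termW lam I tv zv (updateσ lam k a0 b0 σ) := by
    intro σ
    rw [show (φK lam k a0 b0) (termW lam I tv zv σ)
        = (φK lam k a0 b0).toRingHom (termW lam I tv zv σ) from rfl, map_termW]
    rw [show (fun j c => (φK lam k a0 b0).toRingHom (tv j c))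
        = asnSwap (k : ℕ) (a0 : ℕ) (b0 : ℕ) tv from
        funext fun j => funext fun c => φK_tv lam k a0 b0 j c,
      show (fun b => (φK lam k a0 b0).toRingHom (zv b)) = zv from
        funext fun b => φK_zv lam k a0 b0 b]
    exact termW_asnSwap lam k a0 b0 I tv zv σ
  rw [Finset.sum_congr rfl fun σ _ => h1 σ]
  exact Function.Bijective.sum_comp (updateσ_invol lam k a0 b0).bijective _

end SwapK

section Vandermonde

variable {N : ℕ} (lam : Fin N → ℕ)

noncomputable def Dk (j : Fin (N - 1)) : MvPolynomial V ℚ :=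
  ∏ i : Fin (clam lam (j : ℕ)), ∏ l ∈ Finset.Ioi i,
    (X (Sum.inl ((j : ℕ), (l : ℕ))) - X (Sum.inl ((j : ℕ), (i : ℕ))))

noncomputable def Dpoly : MvPolynomial V ℚ := ∏ j : Fin (N - 1), Dk lam j

theorem X_sub_X_ne_zero {v w : V} (h : w ≠ v) : (X w - X v : MvPolynomial V ℚ) ≠ 0 :=
  sub_ne_zero_of_ne fun he => h (X_injective he)

theorem Dpoly_ne_zero : Dpoly lam ≠ 0 := by
  unfold Dpoly Dk
  rw [Finset.prod_ne_zero_iff]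
  intro j _
  rw [Finset.prod_ne_zero_iff]
  intro i _
  rw [Finset.prod_ne_zero_iff]
  intro l hl
  have : i < l := Finset.mem_Ioi.mp hl
  refine X_sub_X_ne_zero ?_
  simp only [ne_eq, Sum.inl.injEq, Prod.mk.injEq, true_and]
  exact fun he => absurd (Fin.ext he : l = i) (ne_of_gt this)

variable (k : Fin (N - 1)) (a0 b0 : Fin (clam lam (k : ℕ)))

theorem rename_swap_Dk_ne (j : Fin (N - 1)) (hj : j ≠ k) :
    rename (Equiv.swap (wv1 lam k a0) (wv2 lam k b0)) (Dk lam j) = Dk lam j := by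
  unfold Dk
  rw [map_prod]
  refine Finset.prod_congr rfl fun i _ => ?_
  rw [map_prod]
  refine Finset.prod_congr rfl fun l _ => ?_
  have hjk : (j : ℕ) ≠ (k : ℕ) := fun he => hj (Fin.ext he)
  rw [map_sub, rename_X, rename_X, swap_inl, swap_inl, if_neg hjk, if_neg hjk]

theorem rename_swap_Dk_eq (hab : a0 ≠ b0) :
    rename (Equiv.swap (wv1 lam k a0) (wv2 lam k b0)) (Dk lam k) = -Dk lam k := by
  have hsw : ∀ c : Fin (clam lam (k : ℕ)),
      (Equiv.swap (wv1 lam k a0) (wv2 lam k b0)) (Sum.inl ((k : ℕ), (c : ℕ)))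
        = Sum.inl ((k : ℕ), ((Equiv.swap a0 b0 c : Fin (clam lam (k : ℕ))) : ℕ)) := by
    intro c
    rw [swap_inl, if_pos rfl, swapf_val]
  have step1 : rename (Equiv.swap (wv1 lam k a0) (wv2 lam k b0)) (Dk lam k)
      = ∏ i : Fin (clam lam (k : ℕ)), ∏ l ∈ Finset.Ioi i,
          (X (Sum.inl ((k : ℕ), ((Equiv.swap a0 b0 l : Fin (clam lam (k : ℕ))) : ℕ)))
            - X (Sum.inl ((k : ℕ), ((Equiv.swap a0 b0 i : Fin (clam lam (k : ℕ))) : ℕ)))) := by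
    unfold Dk
    rw [map_prod]
    refine Finset.prod_congr rfl fun i _ => ?_
    rw [map_prod]
    refine Finset.prod_congr rfl fun l _ => ?_
    rw [map_sub, rename_X, rename_X, hsw, hsw]
  have step2 : (∏ i : Fin (clam lam (k : ℕ)), ∏ l ∈ Finset.Ioi i,
          (X (Sum.inl ((k : ℕ), ((Equiv.swap a0 b0 l : Fin (clam lam (k : ℕ))) : ℕ)))
            - X (Sum.inl ((k : ℕ), ((Equiv.swap a0 b0 i : Fin (clam lam (k : ℕ))) : ℕ)))))
      = ((Matrix.vandermonde (fun c : Fin (clam lam (k : ℕ)) =>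
            (X (Sum.inl ((k : ℕ), (c : ℕ))) : MvPolynomial V ℚ))).submatrix (Equiv.swap a0 b0) id).det := by
    rw [show (Matrix.vandermonde (fun c : Fin (clam lam (k : ℕ)) =>
            (X (Sum.inl ((k : ℕ), (c : ℕ))) : MvPolynomial V ℚ))).submatrix (Equiv.swap a0 b0) id
        = Matrix.vandermonde (fun c : Fin (clam lam (k : ℕ)) =>
            (X (Sum.inl ((k : ℕ), ((Equiv.swap a0 b0 c : Fin (clam lam (k : ℕ))) : ℕ))) : MvPolynomial V ℚ)) from by
      ext i l; simp [Matrix.vandermonde]]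
    rw [Matrix.det_vandermonde]
  have hDk : Dk lam k = (Matrix.vandermonde (fun c : Fin (clam lam (k : ℕ)) =>
      (X (Sum.inl ((k : ℕ), (c : ℕ))) : MvPolynomial V ℚ))).det := by
    rw [Matrix.det_vandermonde]; rfl
  rw [step1, step2, Matrix.det_permute, Equiv.Perm.sign_swap hab, hDk]
  simp

theorem rename_swap_Dpoly (hab : a0 ≠ b0) :
    rename (Equiv.swap (wv1 lam k a0) (wv2 lam k b0)) (Dpoly lam) = -Dpoly lam := by
  unfold Dpoly
  rw [map_prod, ← Finset.mul_prod_erase Finset.univ _ (Finset.mem_univ k),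
    ← Finset.mul_prod_erase Finset.univ (Dk lam) (Finset.mem_univ k),
    rename_swap_Dk_eq lam k a0 b0 hab,
    Finset.prod_congr rfl fun j hj => rename_swap_Dk_ne lam k a0 b0 j (Finset.ne_of_mem_erase hj)]
  ring

end Vandermonde


section Membership

@[simp] theorem algebraMap_X_inl (x y : ℕ) :
    algebraMap (MvPolynomial V ℚ) K (X (Sum.inl (x, y))) = tv x y := rfl

theorem tv_mem (j c : ℕ) : tv j c ∈ (algebraMap (MvPolynomial V ℚ) K).range := ⟨_, rfl⟩

theorem zv_mem (b : ℕ) : zv b ∈ (algebraMap (MvPolynomial V ℚ) K).range := ⟨_, rfl⟩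

theorem tv_sub_tv_ne_zero (kv : ℕ) {x y : ℕ} (h : x ≠ y) : tv kv x - tv kv y ≠ 0 := by
  unfold tv
  rw [← map_sub]
  intro hh
  have h0 : (X (Sum.inl (kv, x)) - X (Sum.inl (kv, y)) : MvPolynomial V ℚ) = 0 :=
    IsFractionRing.injective (MvPolynomial V ℚ) K (by rw [hh, map_zero])
  exact X_sub_X_ne_zero (by simp [h]) h0

theorem nextVar_mem {N : ℕ} (lam : Fin N → ℕ) (σ : SymGrp lam) (j : Fin (N - 1))
    (b : Fin (clam lam ((j : ℕ) + 1))) :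
    nextVar lam tv zv σ j b ∈ (algebraMap (MvPolynomial V ℚ) K).range := by
  unfold nextVar
  split_ifs
  · exact tv_mem _ _
  · exact zv_mem _

theorem lfac_mem {n N : ℕ} (I : Fin N → Finset (Fin n)) (k a b : ℕ) {u v : K}
    (hu : u ∈ (algebraMap (MvPolynomial V ℚ) K).range)
    (hv : v ∈ (algebraMap (MvPolynomial V ℚ) K).range) :
    lfac I k a b u v ∈ (algebraMap (MvPolynomial V ℚ) K).range := by
  unfold lfac
  split_ifs
  · exact sub_mem (add_mem (one_mem _) hv) hu
  · exact sub_mem hv hu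
  · exact one_mem _

theorem level_mem (m kv : ℕ) (τ : Equiv.Perm (Fin m)) :
    (∏ a : Fin m, ∏ b : Fin m,
        if (a : ℕ) < (b : ℕ) then
          (1 + tv kv ((τ b) : ℕ) - tv kv ((τ a) : ℕ)) / (tv kv ((τ b) : ℕ) - tv kv ((τ a) : ℕ))
        else 1)
      * algebraMap (MvPolynomial V ℚ) K
          (∏ i : Fin m, ∏ l ∈ Finset.Ioi i,
            (X (Sum.inl (kv, (l : ℕ))) - X (Sum.inl (kv, (i : ℕ)))))
      ∈ (algebraMap (MvPolynomial V ℚ) K).range := by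
  classical
  rw [prod_if_eq_pairs, prod_Ioi_eq_pairs, map_prod]
  set F : Fin m × Fin m → Fin m × Fin m :=
    fun p => if τ p.1 < τ p.2 then (τ p.1, τ p.2) else (τ p.2, τ p.1) with hF
  set G : Fin m × Fin m → Fin m × Fin m :=
    fun p => if τ⁻¹ p.1 < τ⁻¹ p.2 then (τ⁻¹ p.1, τ⁻¹ p.2) else (τ⁻¹ p.2, τ⁻¹ p.1) with hG
  have hmemF : ∀ p ∈ pairs m, F p ∈ pairs m := by
    intro p hp
    simp only [pairs, Finset.mem_filter, Finset.mem_univ, true_and] at hp ⊢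
    by_cases h : τ p.1 < τ p.2
    · simp [hF, h]
    · have hne : τ p.2 ≠ τ p.1 := fun he => absurd (τ.injective he) (ne_of_gt hp)
      simp only [hF, h, if_false]
      exact lt_of_le_of_ne (not_lt.mp h) hne
  have hmemG : ∀ p ∈ pairs m, G p ∈ pairs m := by
    intro p hp
    simp only [pairs, Finset.mem_filter, Finset.mem_univ, true_and] at hp ⊢
    by_cases h : τ⁻¹ p.1 < τ⁻¹ p.2
    · simp only [hG, if_pos h]; exact h
    · have hne : τ⁻¹ p.2 ≠ τ⁻¹ p.1 := fun he => absurd (τ⁻¹.injective he) (ne_of_gt hp)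
      simp only [hG, h, if_false]
      exact lt_of_le_of_ne (not_lt.mp h) hne
  have hGF : ∀ p ∈ pairs m, G (F p) = p := by
    intro p hp
    simp only [pairs, Finset.mem_filter, Finset.mem_univ, true_and] at hp
    by_cases h : τ p.1 < τ p.2 <;>
      simp [hF, hG, h, Equiv.symm_apply_apply, hp, not_lt.mpr (le_of_lt hp)]
  have hFG : ∀ p ∈ pairs m, F (G p) = p := by
    intro p hp
    simp only [pairs, Finset.mem_filter, Finset.mem_univ, true_and] at hp
    by_cases h : τ⁻¹ p.1 < τ⁻¹ p.2 <;> simp only [Equiv.Perm.inv_def] at h <;>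
      simp [hF, hG, h, Equiv.apply_symm_apply, hp, not_lt.mpr (le_of_lt hp)]
  have hre : (∏ p ∈ pairs m, algebraMap (MvPolynomial V ℚ) K
        (X (Sum.inl (kv, ((p.2 : Fin m) : ℕ))) - X (Sum.inl (kv, ((p.1 : Fin m) : ℕ)))))
      = ∏ p ∈ pairs m, algebraMap (MvPolynomial V ℚ) K
        (X (Sum.inl (kv, (((F p).2 : Fin m) : ℕ))) - X (Sum.inl (kv, (((F p).1 : Fin m) : ℕ)))) := by
    refine (Finset.prod_nbij' F G hmemF hmemG hGF hFG ?_).symm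
    intro p _
    rfl
  rw [hre, ← Finset.prod_mul_distrib]
  refine prod_mem ?_
  intro p hp
  have hp' : p.1 < p.2 := by simpa [pairs] using hp
  have hne : ((τ p.1 : Fin m) : ℕ) ≠ ((τ p.2 : Fin m) : ℕ) :=
    fun he => absurd (τ.injective (Fin.ext he)) (ne_of_lt hp')
  by_cases h : τ p.1 < τ p.2
  · simp only [hF, h, if_true]
    rw [map_sub, algebraMap_X_inl, algebraMap_X_inl,
      div_mul_cancel₀ _ (tv_sub_tv_ne_zero kv hne.symm)]
    exact sub_mem (add_mem (one_mem _) (tv_mem _ _)) (tv_mem _ _)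
  · simp only [hF, h, if_false]
    rw [map_sub, algebraMap_X_inl, algebraMap_X_inl,
      show tv kv ((τ p.1 : Fin m) : ℕ) - tv kv ((τ p.2 : Fin m) : ℕ)
        = -(tv kv ((τ p.2 : Fin m) : ℕ) - tv kv ((τ p.1 : Fin m) : ℕ)) from by ring,
      mul_neg, div_mul_cancel₀ _ (tv_sub_tv_ne_zero kv hne.symm)]
    exact neg_mem (sub_mem (add_mem (one_mem _) (tv_mem _ _)) (tv_mem _ _))

theorem termW_mul_Dpoly_mem {n N : ℕ} (lam : Fin N → ℕ) (I : Fin N → Finset (Fin n))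
    (σ : SymGrp lam) :
    termW lam I tv zv σ * algebraMap (MvPolynomial V ℚ) K (Dpoly lam)
      ∈ (algebraMap (MvPolynomial V ℚ) K).range := by
  unfold termW Dpoly Dk
  rw [map_prod, ← Finset.prod_mul_distrib]
  refine prod_mem fun j _ => ?_
  rw [mul_assoc]
  refine mul_mem ?_ ?_
  · refine prod_mem fun a _ => prod_mem fun b _ => ?_
    exact lfac_mem I _ _ _ (tv_mem _ _) (nextVar_mem lam σ j b)
  · exact level_mem (clam lam (j : ℕ)) (j : ℕ) (σ j)

theorem W_mul_Dpoly_mem {n N : ℕ} (lam : Fin N → ℕ) (I : Fin N → Finset (Fin n)) :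
    W lam I * algebraMap (MvPolynomial V ℚ) K (Dpoly lam)
      ∈ (algebraMap (MvPolynomial V ℚ) K).range := by
  unfold W
  rw [Finset.sum_mul]
  exact sum_mem fun σ _ => termW_mul_Dpoly_mem lam I σ

end Membership


section Divisibility

/-- isolate the variable `v2` as the polynomial variable. -/
noncomputable def iso (v2 : V) :
    MvPolynomial V ℚ ≃ₐ[ℚ] Polynomial (MvPolynomial {x : V // x ≠ v2} ℚ) :=
  (renameEquiv ℚ (Equiv.optionSubtypeNe v2).symm).trans (optionEquivLeft ℚ _)

theorem iso_X_self (v2 : V) : iso v2 (X v2) = Polynomial.X := by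
  simp [iso, Equiv.optionSubtypeNe_symm_self, optionEquivLeft_X_none]

theorem iso_X_ne (v2 : V) {w : V} (hw : w ≠ v2) :
    iso v2 (X w) = Polynomial.C (X ⟨w, hw⟩) := by
  simp [iso, Equiv.optionSubtypeNe_symm_of_ne hw, optionEquivLeft_X_some]

theorem prime_X_sub_X {v1 v2 : V} (h : v1 ≠ v2) :
    Prime (X v2 - X v1 : MvPolynomial V ℚ) := by
  have hι : iso v2 (X v2 - X v1) = Polynomial.X - Polynomial.C (X ⟨v1, h⟩) := by
    rw [map_sub, iso_X_self, iso_X_ne v2 h]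
  have hp : Prime ((iso v2).toRingEquiv.toMulEquiv (X v2 - X v1)) := by
    show Prime (iso v2 (X v2 - X v1))
    rw [hι]
    exact Polynomial.prime_X_sub_C _
  exact (MulEquiv.prime_iff (iso v2).toRingEquiv.toMulEquiv).mp hp

theorem X_sub_X_dvd_of_antisym {v1 v2 : V} (h : v1 ≠ v2) (P : MvPolynomial V ℚ)
    (hanti : rename (Equiv.swap v1 v2) P = -P) :
    (X v2 - X v1 : MvPolynomial V ℚ) ∣ P := by
  classical
  set c : MvPolynomial {x : V // x ≠ v2} ℚ := X ⟨v1, h⟩ with hc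
  set ψ : MvPolynomial V ℚ →+* MvPolynomial {x : V // x ≠ v2} ℚ :=
    (Polynomial.evalRingHom c).comp (iso v2).toAlgHom.toRingHom with hψ
  have hψdef : ∀ Q, ψ Q = Polynomial.eval c (iso v2 Q) := fun Q => rfl
  have hψX : ∀ w : V, ψ (X w) = if hw : w = v2 then c else X ⟨w, hw⟩ := by
    intro w
    by_cases hw : w = v2
    · subst hw
      rw [dif_pos rfl, hψdef, iso_X_self, Polynomial.eval_X]
    · rw [dif_neg hw, hψdef, iso_X_ne v2 hw, Polynomial.eval_C]
  have key : ∀ Q, ψ (rename (Equiv.swap v1 v2) Q) = ψ Q := by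
    intro Q
    induction Q using MvPolynomial.induction_on with
    | C q => rw [rename_C]
    | add p q hp hq => rw [map_add, map_add, map_add, hp, hq]
    | mul_X p w hp =>
      rw [map_mul, map_mul, map_mul, hp, rename_X]
      congr 1
      by_cases hw1 : w = v1
      · subst hw1
        rw [Equiv.swap_apply_left]
        simp [hψX, h, hc]
      · by_cases hw2 : w = v2
        · subst hw2
          rw [Equiv.swap_apply_right]
          simp [hψX, h, hc]
        · rw [Equiv.swap_apply_of_ne_of_ne hw1 hw2]
  have hψP : ψ P = 0 := by
    have h1 : ψ P = -ψ P := by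
      conv_lhs => rw [← key P, hanti]
      rw [map_neg]
    have h2 : (2 : MvPolynomial {x : V // x ≠ v2} ℚ) * ψ P = 0 := by
      rw [two_mul]
      exact eq_neg_iff_add_eq_zero.mp h1
    rcases mul_eq_zero.mp h2 with h3 | h3
    · exact absurd h3 two_ne_zero
    · exact h3
  have hroot : Polynomial.eval c (iso v2 P) = 0 := hψP
  obtain ⟨q, hq⟩ := Polynomial.dvd_iff_isRoot.mpr hroot
  refine ⟨(iso v2).symm q, ?_⟩
  apply (iso v2).injective
  rw [map_mul, map_sub, iso_X_self, iso_X_ne v2 h, AlgEquiv.apply_symm_apply, hq]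

theorem not_dvd_aux {u1 u2 w1 w2 : V} (hw : w1 ≠ w2) (z : V) (hz : z = w1 ∨ z = w2)
    (h1 : z ≠ u1) (h2 : z ≠ u2) :
    ¬ ((X u2 - X u1 : MvPolynomial V ℚ) ∣ (X w2 - X w1)) := by
  rintro ⟨g, hg⟩
  have hev := congrArg (eval (fun t : V => if t = z then (1 : ℚ) else 0)) hg
  rw [eval_mul] at hev
  simp only [eval_sub, eval_X] at hev
  rw [if_neg (show ¬ u2 = z from fun hh => h2 hh.symm),
    if_neg (show ¬ u1 = z from fun hh => h1 hh.symm)] at hev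
  rcases hz with rfl | rfl
  · norm_num [show ¬ w2 = z from fun hh => hw hh.symm] at hev
  · norm_num [hw] at hev

theorem prod_primes_dvd'' {R : Type*} [CommRing R] {ι : Type*} [DecidableEq ι]
    (s : Finset ι) (f : ι → R) :
    ∀ P : R, (∀ i ∈ s, Prime (f i)) → (∀ i ∈ s, ∀ j ∈ s, i ≠ j → ¬ f i ∣ f j) →
      (∀ i ∈ s, f i ∣ P) → (∏ i ∈ s, f i) ∣ P := by
  classical
  induction s using Finset.induction_on with
  | empty => intro P _ _ _; simp
  | @insert a s ha ih =>
    intro P hp hnd hd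
    obtain ⟨P', rfl⟩ := hd a (Finset.mem_insert_self a s)
    rw [Finset.prod_insert ha]
    refine mul_dvd_mul_left _ (ih P'
      (fun i hi => hp i (Finset.mem_insert_of_mem hi))
      (fun i hi j hj hij => hnd i (Finset.mem_insert_of_mem hi) j (Finset.mem_insert_of_mem hj) hij)
      ?_)
    intro i hi
    have hdi := hd i (Finset.mem_insert_of_mem hi)
    have hia : i ≠ a := fun he => ha (he ▸ hi)
    rcases (hp i (Finset.mem_insert_of_mem hi)).2.2 _ _ hdi with h | h
    · exact absurd h (hnd i (Finset.mem_insert_of_mem hi) a (Finset.mem_insert_self a s) hia)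
    · exact h

end Divisibility

section FactorSet

variable {N : ℕ} (lam : Fin N → ℕ)

abbrev TIdx : Type := Σ j : Fin (N - 1), Fin (clam lam (j : ℕ)) × Fin (clam lam (j : ℕ))

noncomputable def fac (x : TIdx lam) : MvPolynomial V ℚ :=
  X (Sum.inl ((x.1 : ℕ), ((x.2.2 : Fin (clam lam (x.1 : ℕ))) : ℕ)))
    - X (Sum.inl ((x.1 : ℕ), ((x.2.1 : Fin (clam lam (x.1 : ℕ))) : ℕ)))

def STset : Finset (TIdx lam) := Finset.univ.filter fun x => x.2.1 < x.2.2

theorem Dpoly_eq_prod_fac : Dpoly lam = ∏ x ∈ STset lam, fac lam x := by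
  unfold Dpoly Dk STset fac
  rw [show (Finset.univ.filter fun x : TIdx lam => x.2.1 < x.2.2)
      = Finset.univ.sigma (fun j : Fin (N - 1) => pairs (clam lam (j : ℕ))) from by
    ext ⟨j, p⟩; simp [pairs]]
  rw [Finset.prod_sigma]
  exact Finset.prod_congr rfl fun j _ => prod_Ioi_eq_pairs _ _

theorem fac_not_dvd {x y : TIdx lam} (hx : x.2.1 < x.2.2) (hy : y.2.1 < y.2.2)
    (hxy : x ≠ y) : ¬ fac lam x ∣ fac lam y := by
  obtain ⟨xj, xa, xb⟩ := x
  obtain ⟨yj, ya, yb⟩ := y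
  simp only at hx hy
  have hw : (Sum.inl ((yj : ℕ), (ya : ℕ)) : V) ≠ Sum.inl ((yj : ℕ), (yb : ℕ)) := by
    simp only [ne_eq, Sum.inl.injEq, Prod.mk.injEq, true_and]
    exact fun he => absurd (Fin.ext he : ya = yb) (ne_of_lt hy)
  by_cases hj : yj = xj
  · subst hj
    have hpq : ¬((ya : ℕ) = (xa : ℕ) ∧ (yb : ℕ) = (xb : ℕ)) := by
      rintro ⟨e1, e2⟩
      exact hxy (by rw [Sigma.mk.inj_iff]; exact ⟨rfl, heq_of_eq (by
        rw [Prod.ext_iff]; exact ⟨(Fin.ext e1).symm, (Fin.ext e2).symm⟩)⟩)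
    by_cases h1 : (ya : ℕ) ≠ (xa : ℕ) ∧ (ya : ℕ) ≠ (xb : ℕ)
    · exact not_dvd_aux hw (Sum.inl ((yj : ℕ), (ya : ℕ))) (Or.inl rfl)
        (by simp only [ne_eq, Sum.inl.injEq, Prod.mk.injEq, true_and]; exact fun he => h1.1 he)
        (by simp only [ne_eq, Sum.inl.injEq, Prod.mk.injEq, true_and]; exact fun he => h1.2 he)
    · by_cases h2 : (yb : ℕ) ≠ (xa : ℕ) ∧ (yb : ℕ) ≠ (xb : ℕ)
      · exact not_dvd_aux hw (Sum.inl ((yj : ℕ), (yb : ℕ))) (Or.inr rfl)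
          (by simp only [ne_eq, Sum.inl.injEq, Prod.mk.injEq, true_and]; exact fun he => h2.1 he)
          (by simp only [ne_eq, Sum.inl.injEq, Prod.mk.injEq, true_and]; exact fun he => h2.2 he)
      · exfalso
        push_neg at h1 h2
        have l1 : (ya : ℕ) < (yb : ℕ) := hy
        have l2 : (xa : ℕ) < (xb : ℕ) := hx
        omega
  · have hjv : (yj : ℕ) ≠ (xj : ℕ) := fun he => hj (Fin.ext he)
    exact not_dvd_aux hw (Sum.inl ((yj : ℕ), (yb : ℕ))) (Or.inr rfl)
      (by simp only [ne_eq, Sum.inl.injEq, Prod.mk.injEq]; exact fun he => hjv he.1)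
      (by simp only [ne_eq, Sum.inl.injEq, Prod.mk.injEq]; exact fun he => hjv he.1)

end FactorSet


/-- For every `I ∈ 𝓘_λ`, the weight function `W_I(t,z)` lies in the
polynomial subring `ℚ[t,z]` of `ℚ(t,z)`: all the denominators cancel after symmetrization. -/
theorem weight_function_is_polynomial (n N : ℕ) (hN : 1 ≤ N)
    (lam : Fin N → ℕ) (hsum : ∑ k, lam k = n)
    (I : Fin N → Finset (Fin n)) (hI : IdxTuple lam I) :
    ∃ p : MvPolynomial V ℚ, W lam I = algebraMap (MvPolynomial V ℚ) K p := by
  classical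
  obtain ⟨P, hP⟩ := W_mul_Dpoly_mem lam I
  have hdvd : ∀ x ∈ STset lam, fac lam x ∣ P := by
    intro x hx
    have hxlt : x.2.1 < x.2.2 := by simpa [STset] using hx
    have hne12 : wv1 lam x.1 x.2.1 ≠ wv2 lam x.1 x.2.2 :=
      wv1_ne_wv2 lam x.1 x.2.1 x.2.2 (ne_of_lt hxlt)
    have hanti : rename (Equiv.swap (wv1 lam x.1 x.2.1) (wv2 lam x.1 x.2.2)) P = -P := by
      apply IsFractionRing.injective (MvPolynomial V ℚ) K
      calc algebraMap (MvPolynomial V ℚ) K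
            (rename (Equiv.swap (wv1 lam x.1 x.2.1) (wv2 lam x.1 x.2.2)) P)
          = φK lam x.1 x.2.1 x.2.2 (algebraMap (MvPolynomial V ℚ) K P) :=
            (φK_algebraMap lam x.1 x.2.1 x.2.2 P).symm
        _ = φK lam x.1 x.2.1 x.2.2
              (W lam I * algebraMap (MvPolynomial V ℚ) K (Dpoly lam)) := by rw [hP]
        _ = W lam I * algebraMap (MvPolynomial V ℚ) K
              (rename (Equiv.swap (wv1 lam x.1 x.2.1) (wv2 lam x.1 x.2.2)) (Dpoly lam)) := by
            rw [map_mul, φK_W, φK_algebraMap]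
        _ = W lam I * algebraMap (MvPolynomial V ℚ) K (-(Dpoly lam)) := by
            rw [rename_swap_Dpoly lam x.1 x.2.1 x.2.2 (ne_of_lt hxlt)]
        _ = -(W lam I * algebraMap (MvPolynomial V ℚ) K (Dpoly lam)) := by
            rw [map_neg, mul_neg]
        _ = algebraMap (MvPolynomial V ℚ) K (-P) := by rw [← hP, map_neg]
    have hfac : fac lam x = X (wv2 lam x.1 x.2.2) - X (wv1 lam x.1 x.2.1) := rfl
    rw [hfac]
    exact X_sub_X_dvd_of_antisym hne12 P hanti
  have hDdvd : Dpoly lam ∣ P := by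
    rw [Dpoly_eq_prod_fac]
    refine prod_primes_dvd'' (STset lam) (fac lam) P ?_ ?_ hdvd
    · intro x hx
      have hxlt : x.2.1 < x.2.2 := by simpa [STset] using hx
      exact prime_X_sub_X (wv1_ne_wv2 lam x.1 x.2.1 x.2.2 (ne_of_lt hxlt))
    · intro x hx y hy hxy
      exact fac_not_dvd lam (by simpa [STset] using hx) (by simpa [STset] using hy) hxy
  obtain ⟨P', hP'⟩ := hDdvd
  refine ⟨P', ?_⟩
  have hD0 : algebraMap (MvPolynomial V ℚ) K (Dpoly lam) ≠ 0 := by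
    rw [map_ne_zero_iff _ (IsFractionRing.injective (MvPolynomial V ℚ) K)]
    exact Dpoly_ne_zero lam
  apply mul_right_cancel₀ hD0
  rw [← hP, hP', map_mul]
  ring

end WeightFn
end

section
/- For every I ∈ 𝓘_λ one has the normalization identity W_I(z_I,z) = e_λ(z_I) · c_I(z) · e^N_I(z) in ℚ[z_1,…,z_n], where e_λ(z_I) = ∏_{k=1}^{N−1} ∏_{a ∈ I^{(k)}} ∏_{b ∈ I^{(k)}} (1 + z_b − z_a) is the substitution of e_λ at I. (Geometrically, this is axiom (II): the restriction of the modified weight function at the fixed point x_I equals c(T_{x_I}Ω_I)·e(N_{x_I}Ω_I).) -/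
open MvPolynomial

namespace WeightFn

/-- The field `ℚ(z_1,…,z_n)` (more generally `F(z_1,…,z_n)`). -/
abbrev Kz (n : ℕ) (F : Type) [Field F] : Type := FractionRing (MvPolynomial (Fin n) F)

/-- The variable `z_{b+1}` (0-based index `b : ℕ`) as an element of `F(z_1,…,z_n)`;
junk value `0` if `b` is out of range. -/
noncomputable def zX (n : ℕ) (F : Type) [Field F] (b : ℕ) : Kz n F :=
  if h : b < n then algebraMap (MvPolynomial (Fin n) F) (Kz n F) (X ⟨b, h⟩) else 0

/-- The substitution `W_I(z_J, z)` of the weight function at `J ∈ 𝓘_λ`: in each term of the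
symmetrization, the variable `t^{(k)}_a` is replaced by `z_{j^{(k)}_a}`, where
`J^{(k)} = {j^{(k)}_1 < … < j^{(k)}_{λ^{(k)}}}`. -/
noncomputable def Wsub {N : ℕ} (n : ℕ) (F : Type) [Field F] (lam : Fin N → ℕ)
    (I J : Fin N → Finset (Fin n)) : Kz n F :=
  ∑ σ : SymGrp lam, termW lam I (fun k a => zX n F (nth (cup J k) a)) (zX n F) σ

/-- The polynomial `c_J(z) = ∏_{k<l} ∏_{a ∈ J_k, b ∈ J_l, a > b} (1 + z_b - z_a)`,
the total Chern class of the tangent space of the Schubert cell `Ω_J` at `x_J`. -/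
noncomputable def cPoly {n N : ℕ} (F : Type) [Field F] (J : Fin N → Finset (Fin n)) :
    MvPolynomial (Fin n) F :=
  ∏ k : Fin N, ∏ l : Fin N,
    if k < l then (∏ a ∈ J k, ∏ b ∈ J l, if b < a then (1 + X b - X a) else 1) else 1

/-- The polynomial `e^N_J(z) = ∏_{k<l} ∏_{a ∈ J_k, b ∈ J_l, b > a} (z_b - z_a)`,
the Euler class of the normal space of the Schubert cell `Ω_J` at `x_J`. -/
noncomputable def eNPoly {n N : ℕ} (F : Type) [Field F] (J : Fin N → Finset (Fin n)) :
    MvPolynomial (Fin n) F :=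
  ∏ k : Fin N, ∏ l : Fin N,
    if k < l then (∏ a ∈ J k, ∏ b ∈ J l, if a < b then (X b - X a) else 1) else 1

/-- The substitution `e_λ(z_J) = ∏_{k=1}^{N-1} ∏_{a ∈ J^{(k)}} ∏_{b ∈ J^{(k)}} (1 + z_b - z_a)`
of `e_λ(t)` at `J ∈ 𝓘_λ`. -/
noncomputable def elamSub {n N : ℕ} (F : Type) [Field F] (J : Fin N → Finset (Fin n)) :
    MvPolynomial (Fin n) F :=
  ∏ k ∈ Finset.range (N - 1), ∏ a ∈ cup J k, ∏ b ∈ cup J k, (1 + X b - X a)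

/-- `dim Fl_λ = ∑_{k<l} λ_k · λ_l`, the dimension of the partial flag manifold. -/
def dimFl {N : ℕ} (lam : Fin N → ℕ) : ℕ :=
  ∑ k : Fin N, ∑ l : Fin N, if k < l then lam k * lam l else 0

/- ========= auxiliary lemmas ========= -/

section Aux

variable {n N : ℕ} {lam : Fin N → ℕ} {I : Fin N → Finset (Fin n)}

lemma card_cup (hI : IdxTuple lam I) (k : ℕ) : (cup I k).card = clam lam k := by
  rw [cup, Finset.card_biUnion]
  · rw [clam]
    refine Finset.sum_congr rfl fun l _ => ?_
    split_ifs <;> simp [hI.2 l]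
  · intro l _ m _ hlm
    simp only [Function.onFun]
    split_ifs with h1 h2 h2
    · exact hI.1 l m hlm
    all_goals simp

lemma cup_subset {k k' : ℕ} (h : k ≤ k') : cup I k ⊆ cup I k' := by
  intro x hx
  simp only [cup, Finset.mem_biUnion, Finset.mem_univ, true_and] at hx ⊢
  obtain ⟨l, hl⟩ := hx
  by_cases h1 : (l:ℕ) ≤ k
  · refine ⟨l, ?_⟩
    rw [if_pos (h1.trans h)]
    rw [if_pos h1] at hl
    exact hl
  · rw [if_neg h1] at hl
    exact absurd hl (Finset.notMem_empty x)

lemma nth_eq {S : Finset (Fin n)} {m : ℕ} (h : S.card = m) (a : Fin m) :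
    nth S a = (S.orderEmbOfFin h a : Fin n).val := by
  rw [nth, Finset.orderEmbOfFin_apply,
    List.getD_eq_getElem _ _ (by simp [h, a.isLt]), List.getElem_map]
  simp [Fin.getElem_fin]

lemma nth_lt_nth {S : Finset (Fin n)} {m : ℕ} (h : S.card = m) {a b : Fin m} (hab : a < b) :
    nth S a < nth S b := by
  rw [nth_eq h a, nth_eq h b]
  exact (S.orderEmbOfFin h).strictMono hab

lemma exists_nth_eq {S : Finset (Fin n)} {m : ℕ} (h : S.card = m) {x : Fin n} (hx : x ∈ S) :
    ∃ b : Fin m, nth S b = (x : ℕ) := by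
  have hr := Finset.range_orderEmbOfFin S h
  have : x ∈ Set.range (S.orderEmbOfFin h) := by rw [hr]; exact hx
  obtain ⟨b, hb⟩ := this
  exact ⟨b, by rw [nth_eq h b, hb]⟩

lemma nth_univ {b : ℕ} (hb : b < n) : nth (Finset.univ : Finset (Fin n)) b = b := by
  have h : (Finset.univ : Finset (Fin n)).card = n := by simp
  have hid : (id : Fin n → Fin n) = ⇑(Finset.univ.orderEmbOfFin h) :=
    Finset.orderEmbOfFin_unique h (fun x => Finset.mem_univ x) strictMono_id
  have h2 : nth (Finset.univ : Finset (Fin n)) (((⟨b, hb⟩ : Fin n)) : ℕ)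
      = ((Finset.univ.orderEmbOfFin h) ⟨b, hb⟩ : Fin n).val := nth_eq h ⟨b, hb⟩
  rw [← congrFun hid ⟨b, hb⟩] at h2
  simpa using h2

lemma clam_last {M : ℕ} {lam : Fin (M+1) → ℕ} (hsum : ∑ k, lam k = n) : clam lam M = n := by
  rw [clam, ← hsum]
  exact Finset.sum_congr rfl fun l _ => if_pos (Nat.lt_succ_iff.mp l.isLt)

lemma cup_last {M : ℕ} {lam : Fin (M+1) → ℕ} {I : Fin (M+1) → Finset (Fin n)}
    (hI : IdxTuple lam I) (hsum : ∑ k, lam k = n) : cup I M = Finset.univ :=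
  Finset.eq_univ_of_card _ (by rw [card_cup hI, clam_last hsum, Fintype.card_fin])

lemma cup_succ {M : ℕ} {I : Fin (M+1) → Finset (Fin n)} (k : Fin M) :
    cup I ((k:ℕ)+1) = cup I (k:ℕ) ∪ I k.succ := by
  ext x
  simp only [cup, Finset.mem_biUnion, Finset.mem_univ, true_and, Finset.mem_union]
  constructor
  · rintro ⟨l, hl⟩
    split_ifs at hl with h1
    · rcases Nat.lt_succ_iff_lt_or_eq.mp (Nat.lt_succ_of_le h1) with h | h
      · exact Or.inl ⟨l, by rw [if_pos (Nat.lt_succ_iff.mp h)]; exact hl⟩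
      · right
        have : l = k.succ := Fin.ext (by simpa using h1.antisymm (by omega))
        · rwa [← this]
    · exact absurd hl (Finset.notMem_empty x)
  · rintro (⟨l, hl⟩ | h)
    · split_ifs at hl with h1
      · exact ⟨l, by rw [if_pos (by omega)]; exact hl⟩
      · exact absurd hl (Finset.notMem_empty x)
    · refine ⟨k.succ, ?_⟩
      rw [if_pos (by simp [Fin.val_succ])]
      exact h

lemma disjoint_cup_succ {M : ℕ} {lam : Fin (M+1) → ℕ} {I : Fin (M+1) → Finset (Fin n)}
    (hI : IdxTuple lam I) (k : Fin M) : Disjoint (cup I (k:ℕ)) (I k.succ) := by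
  rw [Finset.disjoint_left]
  intro x hx hx'
  simp only [cup, Finset.mem_biUnion, Finset.mem_univ, true_and] at hx
  obtain ⟨l, hl⟩ := hx
  split_ifs at hl with h1
  · have hne : l ≠ k.succ := by
      intro h; rw [h] at h1; simp [Fin.val_succ] at h1
    exact Finset.disjoint_left.mp (hI.1 l k.succ hne) hl hx'
  · exact absurd hl (Finset.notMem_empty x)

lemma prod_emb {β : Type*} [CommMonoid β] {S : Finset (Fin n)} {m : ℕ} (h : S.card = m)
    (F : Fin n → β) : ∏ a : Fin m, F (S.orderEmbOfFin h a) = ∏ x ∈ S, F x := by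
  refine Finset.prod_bij (fun a _ => S.orderEmbOfFin h a)
    (fun a _ => Finset.orderEmbOfFin_mem S h a)
    (fun a _ b _ hab => (S.orderEmbOfFin h).injective hab)
    (fun x hx => ?_) (fun a _ => rfl)
  have hr := Finset.range_orderEmbOfFin S h
  have : x ∈ Set.range (S.orderEmbOfFin h) := by rw [hr]; exact hx
  obtain ⟨b, hb⟩ := this
  exact ⟨b, Finset.mem_univ b, hb⟩

/-- The variable `z_{x+1}` as an element of the fraction field. -/
noncomputable def Zv (n : ℕ) (x : Fin n) : Kz n ℚ :=
  algebraMap (MvPolynomial (Fin n) ℚ) (Kz n ℚ) (X x)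

/-- The basic weight factor attached to a pair of elements of `Fin n`. -/
noncomputable def Gf (n : ℕ) (x y : Fin n) : Kz n ℚ :=
  if (y:ℕ) < (x:ℕ) then 1 + Zv n y - Zv n x
  else if (x:ℕ) < (y:ℕ) then Zv n y - Zv n x else 1

/-- The factor of the symmetrization denominator product. -/
noncomputable def qf (n : ℕ) (x y : Fin n) : Kz n ℚ :=
  if (x:ℕ) < (y:ℕ) then (1 + Zv n y - Zv n x) / (Zv n y - Zv n x) else 1

lemma Zv_sub_ne {x y : Fin n} (hxy : x ≠ y) : Zv n y - Zv n x ≠ 0 := by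
  have hinj : Function.Injective (algebraMap (MvPolynomial (Fin n) ℚ) (Kz n ℚ)) :=
    IsFractionRing.injective _ _
  rw [Zv, Zv, ← map_sub]
  rw [map_ne_zero_iff _ hinj]
  rw [sub_ne_zero]
  exact fun h => hxy (MvPolynomial.X_injective h).symm

lemma Gf_mul_qf {x y : Fin n} : Gf n x y * qf n x y = 1 + Zv n y - Zv n x := by
  rw [Gf, qf]
  rcases lt_trichotomy (x:ℕ) (y:ℕ) with h | h | h
  · rw [if_neg (by omega), if_pos h, if_pos h, mul_comm,
      div_mul_cancel₀ _ (Zv_sub_ne (fun he => lt_irrefl _ (he ▸ h)))]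
  · have hxy : x = y := Fin.ext h
    rw [if_neg (by omega), if_neg (by omega), if_neg (by omega), hxy, mul_one,
      add_sub_cancel_right]
  · rw [if_pos h, if_neg (by omega), mul_one]

lemma zX_nth {S : Finset (Fin n)} {m : ℕ} (h : S.card = m) (a : Fin m) :
    zX n ℚ (nth S a) = Zv n (S.orderEmbOfFin h a) := by
  rw [nth_eq h, zX, dif_pos (S.orderEmbOfFin h a).isLt, Zv, Fin.eta]

lemma prod_cup {β : Type*} [CommMonoid β] (hI : IdxTuple lam I) (k : ℕ) (F : Fin n → β) :
    ∏ x ∈ cup I k, F x = ∏ l : Fin N, if (l:ℕ) ≤ k then ∏ x ∈ I l, F x else 1 := by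
  rw [cup, Finset.prod_biUnion]
  · refine Finset.prod_congr rfl fun l _ => ?_
    split_ifs <;> simp
  · intro l _ m _ hlm
    simp only [Function.onFun]
    split_ifs with h1 h2 h2
    · exact hI.1 l m hlm
    all_goals simp

end Aux

section Main

variable {n M : ℕ} {lam : Fin (M+1) → ℕ} {I : Fin (M+1) → Finset (Fin n)}

lemma nextVar_eval (hI : IdxTuple lam I) (hsum : ∑ k, lam k = n)
    (σ : SymGrp lam) (k : Fin (M+1-1))
    (hσk : ∀ h : (k:ℕ)+1 < M+1-1, σ ⟨(k:ℕ)+1, h⟩ = 1)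
    (b : Fin (clam lam ((k:ℕ)+1))) :
    nextVar lam (fun k a => zX n ℚ (nth (cup I k) a)) (zX n ℚ) σ k b
      = zX n ℚ (nth (cup I ((k:ℕ)+1)) b) := by
  rw [nextVar]
  split
  case isTrue h =>
    rw [hσk h]
    rfl
  case isFalse h =>
    have hM : (k:ℕ)+1 = M := by
      have := k.isLt
      omega
    have hbn : (b:ℕ) < n :=
      lt_of_lt_of_le b.isLt (le_of_eq (by rw [hM, clam_last hsum]))
    have hcup : cup I ((k:ℕ)+1) = Finset.univ := by
      rw [hM]
      exact cup_last hI hsum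
    rw [hcup, nth_univ hbn]

lemma termW_eq_zero (hI : IdxTuple lam I) (hsum : ∑ k, lam k = n)
    (σ : SymGrp lam) (hσ : σ ≠ 1) :
    termW lam I (fun k a => zX n ℚ (nth (cup I k) a)) (zX n ℚ) σ = 0 := by
  classical
  have hne : (Finset.univ.filter fun k => σ k ≠ 1).Nonempty := by
    rw [Finset.filter_nonempty_iff]
    by_contra h
    push_neg at h
    exact hσ (funext fun k => h k (Finset.mem_univ k))
  set s := Finset.univ.filter fun k => σ k ≠ 1 with hs
  set k := s.max' hne with hkdef
  have hkm : σ k ≠ 1 := by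
    have h1 : k ∈ Finset.univ.filter fun k => σ k ≠ 1 := Finset.max'_mem _ hne
    exact (Finset.mem_filter.mp h1).2
  have hmax : ∀ h : (k:ℕ)+1 < M+1-1, σ ⟨(k:ℕ)+1, h⟩ = 1 := by
    intro h
    by_contra h'
    have hmem : (⟨(k:ℕ)+1, h⟩ : Fin (M+1-1)) ∈ Finset.univ.filter fun k => σ k ≠ 1 :=
      Finset.mem_filter.mpr ⟨Finset.mem_univ _, h'⟩
    have hle : (⟨(k:ℕ)+1, h⟩ : Fin (M+1-1)) ≤ k := Finset.le_max' _ _ hmem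
    simp [Fin.le_def] at hle
  have ha : ∃ a : Fin (clam lam (k:ℕ)), (a:ℕ) < ((σ k) a : ℕ) := by
    by_contra h
    push_neg at h
    apply hkm
    have hsum' : ∑ a : Fin (clam lam (k:ℕ)), ((σ k) a : ℕ)
        = ∑ a : Fin (clam lam (k:ℕ)), (a:ℕ) := Equiv.sum_comp (σ k) Fin.val
    have heq := (Finset.sum_eq_sum_iff_of_le (fun a _ => h a)).mp hsum'
    exact Equiv.ext fun a => Fin.ext (heq a (Finset.mem_univ a))
  obtain ⟨a, halt⟩ := ha
  have hmem : (cup I (k:ℕ)).orderEmbOfFin (card_cup hI (k:ℕ)) ((σ k) a) ∈ cup I ((k:ℕ)+1) :=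
    cup_subset (Nat.le_succ _) (Finset.orderEmbOfFin_mem _ _ _)
  obtain ⟨b, hb⟩ := exists_nth_eq (card_cup hI ((k:ℕ)+1)) hmem
  have hb' : nth (cup I ((k:ℕ)+1)) b = nth (cup I (k:ℕ)) ((σ k) a) := by
    rw [hb, nth_eq (card_cup hI (k:ℕ))]
  have hlt : nth (cup I (k:ℕ)) a < nth (cup I ((k:ℕ)+1)) b := by
    rw [hb']
    exact nth_lt_nth (card_cup hI (k:ℕ)) halt
  rw [termW]
  apply Finset.prod_eq_zero (Finset.mem_univ k)
  apply mul_eq_zero_of_left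
  apply Finset.prod_eq_zero (Finset.mem_univ a)
  apply Finset.prod_eq_zero (Finset.mem_univ b)
  rw [nextVar_eval hI hsum σ k hmax b, lfac, if_neg (by omega), if_pos hlt, hb']
  exact sub_self _

lemma lfac_eval (hI : IdxTuple lam I) (hsum : ∑ k, lam k = n) (k : Fin (M+1-1))
    (a : Fin (clam lam (k:ℕ))) (b : Fin (clam lam ((k:ℕ)+1))) :
    lfac I (k:ℕ) (a:ℕ) (b:ℕ) (zX n ℚ (nth (cup I (k:ℕ)) (a:ℕ)))
      (nextVar lam (fun k a => zX n ℚ (nth (cup I k) a)) (zX n ℚ) 1 k b)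
    = Gf n ((cup I (k:ℕ)).orderEmbOfFin (card_cup hI (k:ℕ)) a)
        ((cup I ((k:ℕ)+1)).orderEmbOfFin (card_cup hI ((k:ℕ)+1)) b) := by
  rw [nextVar_eval hI hsum 1 k (fun h => rfl) b, lfac, Gf,
    zX_nth (card_cup hI (k:ℕ)) a, zX_nth (card_cup hI ((k:ℕ)+1)) b,
    nth_eq (card_cup hI (k:ℕ)) a, nth_eq (card_cup hI ((k:ℕ)+1)) b]

lemma qf_eval (hI : IdxTuple lam I) (k : ℕ) (a b : Fin (clam lam k)) :
    (if (a:ℕ) < (b:ℕ) then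
      (1 + zX n ℚ (nth (cup I k) b) - zX n ℚ (nth (cup I k) a)) /
        (zX n ℚ (nth (cup I k) b) - zX n ℚ (nth (cup I k) a)) else 1)
    = qf n ((cup I k).orderEmbOfFin (card_cup hI k) a)
        ((cup I k).orderEmbOfFin (card_cup hI k) b) := by
  rw [qf, zX_nth (card_cup hI k) a, zX_nth (card_cup hI k) b]
  by_cases hab : (a:ℕ) < (b:ℕ)
  · rw [if_pos hab, if_pos (Fin.lt_def.mp
      (((cup I k).orderEmbOfFin (card_cup hI k)).strictMono (Fin.lt_def.mpr hab)))]
  · rw [if_neg hab, if_neg (fun hc => hab (Fin.lt_def.mp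
      ((((cup I k).orderEmbOfFin (card_cup hI k)).lt_iff_lt).mp (Fin.lt_def.mpr hc))))]

lemma termW_one (hI : IdxTuple lam I) (hsum : ∑ k, lam k = n) :
    termW lam I (fun k a => zX n ℚ (nth (cup I k) a)) (zX n ℚ) (1 : SymGrp lam) =
      algebraMap (MvPolynomial (Fin n) ℚ) (Kz n ℚ)
        (elamSub ℚ I * cPoly ℚ I * eNPoly ℚ I) := by
  have step1 : termW lam I (fun k a => zX n ℚ (nth (cup I k) a)) (zX n ℚ) (1 : SymGrp lam)
      = ∏ k : Fin (M+1-1),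
          ((∏ x ∈ cup I (k:ℕ), ∏ y ∈ cup I ((k:ℕ)+1), Gf n x y) *
           (∏ x ∈ cup I (k:ℕ), ∏ y ∈ cup I (k:ℕ), qf n x y)) := by
    rw [termW]
    refine Finset.prod_congr rfl fun k _ => ?_
    simp only [Pi.one_apply, Equiv.Perm.coe_one, id_eq]
    congr 1
    · rw [← prod_emb (card_cup hI (k:ℕ)) (fun x => ∏ y ∈ cup I ((k:ℕ)+1), Gf n x y)]
      refine Finset.prod_congr rfl fun a _ => ?_
      rw [← prod_emb (card_cup hI ((k:ℕ)+1))
        (Gf n ((cup I (k:ℕ)).orderEmbOfFin (card_cup hI (k:ℕ)) a))]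
      exact Finset.prod_congr rfl fun b _ => lfac_eval hI hsum k a b
    · rw [← prod_emb (card_cup hI (k:ℕ)) (fun x => ∏ y ∈ cup I (k:ℕ), qf n x y)]
      refine Finset.prod_congr rfl fun a _ => ?_
      rw [← prod_emb (card_cup hI (k:ℕ))
        (qf n ((cup I (k:ℕ)).orderEmbOfFin (card_cup hI (k:ℕ)) a))]
      exact Finset.prod_congr rfl fun b _ => qf_eval hI (k:ℕ) a b
  have hsplit : ∀ k : Fin (M+1-1),
      (∏ x ∈ cup I (k:ℕ), ∏ y ∈ cup I ((k:ℕ)+1), Gf n x y) *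
        (∏ x ∈ cup I (k:ℕ), ∏ y ∈ cup I (k:ℕ), qf n x y)
      = (∏ x ∈ cup I (k:ℕ), ∏ y ∈ cup I (k:ℕ), (1 + Zv n y - Zv n x)) *
        (∏ x ∈ cup I (k:ℕ), ∏ y ∈ I (Fin.succ k), Gf n x y) := by
    intro k
    rw [cup_succ k]
    simp only [Finset.prod_union (disjoint_cup_succ hI k)]
    rw [Finset.prod_mul_distrib, mul_right_comm]
    congr 1
    rw [← Finset.prod_mul_distrib]
    refine Finset.prod_congr rfl fun x _ => ?_
    rw [← Finset.prod_mul_distrib]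
    exact Finset.prod_congr rfl fun y _ => Gf_mul_qf
  have hE : (∏ k : Fin (M+1-1), ∏ x ∈ cup I (k:ℕ), ∏ y ∈ cup I (k:ℕ), (1 + Zv n y - Zv n x))
      = algebraMap (MvPolynomial (Fin n) ℚ) (Kz n ℚ) (elamSub ℚ I) := by
    rw [elamSub, map_prod,
      ← Fin.prod_univ_eq_prod_range (fun j => algebraMap (MvPolynomial (Fin n) ℚ) (Kz n ℚ)
        (∏ a ∈ cup I j, ∏ b ∈ cup I j, (1 + X b - X a))) (M+1-1)]
    refine Finset.prod_congr rfl fun k _ => ?_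
    rw [map_prod]
    refine Finset.prod_congr rfl fun x _ => ?_
    rw [map_prod]
    refine Finset.prod_congr rfl fun y _ => ?_
    rw [map_sub, map_add, map_one]
    rfl
  have hfac : ∀ kk ll : Fin (M+1),
      algebraMap (MvPolynomial (Fin n) ℚ) (Kz n ℚ)
          (if kk < ll then (∏ a ∈ I kk, ∏ b ∈ I ll, if b < a then (1 + X b - X a) else 1) else 1) *
        algebraMap (MvPolynomial (Fin n) ℚ) (Kz n ℚ)
          (if kk < ll then (∏ a ∈ I kk, ∏ b ∈ I ll, if a < b then (X b - X a) else 1) else 1)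
      = (if kk < ll then ∏ x ∈ I kk, ∏ y ∈ I ll, Gf n x y else 1) := by
    intro kk ll
    split_ifs with h
    · rw [map_prod, map_prod, ← Finset.prod_mul_distrib]
      refine Finset.prod_congr rfl fun x hx => ?_
      rw [map_prod, map_prod, ← Finset.prod_mul_distrib]
      refine Finset.prod_congr rfl fun y hy => ?_
      have hxy : x ≠ y := fun he =>
        Finset.disjoint_left.mp (hI.1 kk ll (ne_of_lt h)) hx (he ▸ hy)
      rcases lt_trichotomy (x:ℕ) (y:ℕ) with hv | hv | hv
      · rw [if_neg (fun hc : y < x => absurd (Fin.lt_def.mp hc) (by omega)),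
          if_pos (Fin.lt_def.mpr hv), Gf, if_neg (by omega : ¬ (y:ℕ) < (x:ℕ)), if_pos hv,
          map_one, one_mul, map_sub]
        simp only [Zv]
      · exact absurd (Fin.ext hv) hxy
      · rw [if_pos (Fin.lt_def.mpr hv),
          if_neg (fun hc : x < y => absurd (Fin.lt_def.mp hc) (by omega)),
          Gf, if_pos hv, map_one, mul_one, map_sub, map_add, map_one]
        simp only [Zv]
    · rw [map_one, one_mul]
  have hB : (∏ k : Fin (M+1-1), ∏ x ∈ cup I (k:ℕ), ∏ y ∈ I (Fin.succ k), Gf n x y)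
      = algebraMap (MvPolynomial (Fin n) ℚ) (Kz n ℚ) (cPoly ℚ I) *
        algebraMap (MvPolynomial (Fin n) ℚ) (Kz n ℚ) (eNPoly ℚ I) := by
    have hR : algebraMap (MvPolynomial (Fin n) ℚ) (Kz n ℚ) (cPoly ℚ I) *
          algebraMap (MvPolynomial (Fin n) ℚ) (Kz n ℚ) (eNPoly ℚ I)
        = ∏ kk : Fin (M+1), ∏ ll : Fin (M+1),
            if kk < ll then ∏ x ∈ I kk, ∏ y ∈ I ll, Gf n x y else 1 := by
      rw [cPoly, eNPoly, map_prod, map_prod, ← Finset.prod_mul_distrib]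
      refine Finset.prod_congr rfl fun kk _ => ?_
      rw [map_prod, map_prod, ← Finset.prod_mul_distrib]
      exact Finset.prod_congr rfl fun ll _ => hfac kk ll
    have hL : (∏ k : Fin (M+1-1), ∏ x ∈ cup I (k:ℕ), ∏ y ∈ I (Fin.succ k), Gf n x y)
        = ∏ k : Fin (M+1-1), ∏ l : Fin (M+1),
            if (l:ℕ) ≤ (k:ℕ) then ∏ x ∈ I l, ∏ y ∈ I (Fin.succ k), Gf n x y else 1 :=
      Finset.prod_congr rfl fun k _ =>
        prod_cup hI (k:ℕ) (fun x => ∏ y ∈ I (Fin.succ k), Gf n x y)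
    have hR2 : (∏ kk : Fin (M+1), ∏ ll : Fin (M+1),
          if kk < ll then ∏ x ∈ I kk, ∏ y ∈ I ll, Gf n x y else 1)
        = ∏ k : Fin (M+1-1), ∏ l : Fin (M+1),
            if (l:ℕ) ≤ (k:ℕ) then ∏ x ∈ I l, ∏ y ∈ I (Fin.succ k), Gf n x y else 1 := by
      rw [Finset.prod_comm, Fin.prod_univ_succ,
        Finset.prod_eq_one fun kk (_ : kk ∈ Finset.univ) =>
          if_neg (by simp : ¬ kk < (0 : Fin (M+1))), one_mul]
      refine Finset.prod_congr rfl fun k _ => Finset.prod_congr rfl fun l _ => ?_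
      exact if_congr (by rw [Fin.lt_def, Fin.val_succ, Nat.lt_succ_iff]) rfl rfl
    rw [hL, hR, hR2]
  rw [step1, Finset.prod_congr rfl fun k _ => hsplit k, Finset.prod_mul_distrib,
    hE, hB, map_mul, map_mul, mul_assoc]

end Main


/-- For every `I ∈ 𝓘_λ`, the normalization identity
`W_I(z_I, z) = e_λ(z_I) · c_I(z) · e^N_I(z)` holds in `ℚ[z_1,…,z_n]`
(axiom (II): the restriction of the modified weight function at the fixed point `x_I`
equals `c(T_{x_I}Ω_I) · e(N_{x_I}Ω_I)`). -/
theorem weight_function_normalization (n N : ℕ) (hN : 1 ≤ N)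
    (lam : Fin N → ℕ) (hsum : ∑ k, lam k = n)
    (I : Fin N → Finset (Fin n)) (hI : IdxTuple lam I) :
    Wsub n ℚ lam I I =
      algebraMap (MvPolynomial (Fin n) ℚ) (Kz n ℚ)
        (elamSub ℚ I * cPoly ℚ I * eNPoly ℚ I) := by
  obtain ⟨M, rfl⟩ : ∃ M, N = M + 1 := ⟨N - 1, (Nat.succ_pred_eq_of_pos hN).symm⟩
  rw [Wsub, Finset.sum_eq_single (1 : SymGrp lam)
    (fun σ _ hσ => termW_eq_zero hI hsum σ hσ)
    (fun h => absurd (Finset.mem_univ _) h)]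
  exact termW_one hI hsum


end WeightFn
end
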